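/- Every tree-child binary phylogenetic network is an orchard network, and if (i,j) is a reducible pair of a tree-child network N, then the reduction N^{(i,j)} is again tree-child. -/

import Mathlib

/-- A directed graph with node set `V ⊆ ℕ` and arc set `A`.  Leaves are
identified with their taxon labels (natural numbers). -/
structure Net where
  V : Finset ℕ
  A : Finset (ℕ × ℕ)

namespace Net

def indeg (N : Net) (v : ℕ) : ℕ := (N.A.filter (fun a => a.2 = v)).card
def outdeg (N : Net) (v : ℕ) : ℕ := (N.A.filter (fun a => a.1 = v)).card

def isLeaf (N : Net) (v : ℕ) : Prop := v ∈ N.V ∧ N.indeg v = 1 ∧ N.outdeg v = 0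
def isRoot (N : Net) (v : ℕ) : Prop := v ∈ N.V ∧ N.indeg v = 0 ∧ N.outdeg v = 1
def isTreeNode (N : Net) (v : ℕ) : Prop := v ∈ N.V ∧ N.indeg v = 1 ∧ N.outdeg v = 2
def isRetic (N : Net) (v : ℕ) : Prop := v ∈ N.V ∧ N.indeg v = 2 ∧ N.outdeg v = 1

/-- The set of leaves (= taxa) of a network. -/
def leaves (N : Net) : Finset ℕ := N.V.filter (fun v => N.indeg v = 1 ∧ N.outdeg v = 0)

/-- Number of reticulation nodes. -/
def numRetic (N : Net) : ℕ := (N.V.filter (fun v => N.indeg v = 2 ∧ N.outdeg v = 1)).card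

/-- `N` is a rooted binary phylogenetic network: arcs join nodes, it is acyclic,
has a unique root, and every node is a root, leaf, tree node or reticulation. -/
def isPhylo (N : Net) : Prop :=
  (∀ a ∈ N.A, a.1 ∈ N.V ∧ a.2 ∈ N.V) ∧
  (∀ v, ¬ Relation.TransGen (fun u w => (u, w) ∈ N.A) v v) ∧
  (∃! r, N.isRoot r) ∧
  (∀ v ∈ N.V, N.isRoot v ∨ N.isLeaf v ∨ N.isTreeNode v ∨ N.isRetic v)

/-- `(i,j)` is a cherry: `i ≠ j` are leaves with a common parent. -/
def isCherry (N : Net) (i j : ℕ) : Prop :=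
  i ≠ j ∧ N.isLeaf i ∧ N.isLeaf j ∧ ∃ p, (p, i) ∈ N.A ∧ (p, j) ∈ N.A

/-- `(i,j)` is a reticulated cherry: the parent of `i` is a reticulation,
the parent of `j` is a tree node and a parent of the parent of `i`. -/
def isRetCherry (N : Net) (i j : ℕ) : Prop :=
  i ≠ j ∧ N.isLeaf i ∧ N.isLeaf j ∧
    ∃ pi pj, (pi, i) ∈ N.A ∧ (pj, j) ∈ N.A ∧
      N.isRetic pi ∧ N.isTreeNode pj ∧ (pj, pi) ∈ N.A

/-- `(i,j)` is a reducible pair. -/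
def Reducible (N : Net) (s : ℕ × ℕ) : Prop := N.isCherry s.1 s.2 ∨ N.isRetCherry s.1 s.2

end Net

/-- The reduction of a cherry `(i,j)`: delete leaf `i` and simplify the
(now elementary) common parent `p`, whose parent is `g`. -/
def CherryReduce (N : Net) (i j : ℕ) (N' : Net) : Prop :=
  ∃ p g, (p, i) ∈ N.A ∧ (p, j) ∈ N.A ∧ (g, p) ∈ N.A ∧
    N'.V = (N.V.erase i).erase p ∧
    N'.A = (N.A \ {(p, i), (p, j), (g, p)}) ∪ {(g, j)}

/-- The reduction of a reticulated cherry `(i,j)`: delete the arc from the parent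
`pj` of `j` to the parent `pi` of `i`, and simplify the two elementary nodes. -/
def RetCherryReduce (N : Net) (i j : ℕ) (N' : Net) : Prop :=
  ∃ pi pj q g, (pi, i) ∈ N.A ∧ (pj, j) ∈ N.A ∧ (pj, pi) ∈ N.A ∧
    (q, pi) ∈ N.A ∧ q ≠ pj ∧ (g, pj) ∈ N.A ∧
    N'.V = (N.V.erase pi).erase pj ∧
    N'.A = (N.A \ {(pj, pi), (q, pi), (pi, i), (g, pj), (pj, j)}) ∪ {(q, i), (g, j)}

/-- `N'` is the reduction `N^{(i,j)}` of the reducible pair `s = (i,j)` in `N`. -/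
def Reduces (N : Net) (s : ℕ × ℕ) (N' : Net) : Prop :=
  (N.isCherry s.1 s.2 ∧ CherryReduce N s.1 s.2 N') ∨
  (N.isRetCherry s.1 s.2 ∧ RetCherryReduce N s.1 s.2 N')

/-- `N'` is the result of reducing in `N` the pairs of the sequence `S`, from left to right. -/
inductive ReducesSeq : Net → List (ℕ × ℕ) → Net → Prop
  | nil (N : Net) : ReducesSeq N [] N
  | cons {N M N' : Net} {s : ℕ × ℕ} {S : List (ℕ × ℕ)} :
      Reduces N s M → ReducesSeq M S N' → ReducesSeq N (s :: S) N'

/-- `N` is the trivial network `I l` (a root and the leaf `l`). -/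
def isTrivial (N : Net) (l : ℕ) : Prop :=
  ∃ r, r ≠ l ∧ N.V = {r, l} ∧ N.A = {(r, l)}

/-- `S` is a complete reducible sequence for `N`. -/
def CompleteRS (N : Net) (S : List (ℕ × ℕ)) : Prop :=
  ∃ N' l, ReducesSeq N S N' ∧ isTrivial N' l

/-- `N` is an orchard network. -/
def Net.isOrchard (N : Net) : Prop := N.isPhylo ∧ ∃ S, CompleteRS N S

/-- Isomorphism of networks: an arc-preserving and arc-reflecting bijection
of the nodes which is the identity on the leaves. -/
def NetIso (N N' : Net) : Prop :=
  ∃ φ : ℕ → ℕ, Set.BijOn φ ↑N.V ↑N'.V ∧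
    (∀ u ∈ N.V, ∀ v ∈ N.V, ((u, v) ∈ N.A ↔ (φ u, φ v) ∈ N'.A)) ∧
    ∀ l ∈ N.leaves, φ l = l

/-- Augmentation of `(i,j)` when `i` is a new taxon: create a new leaf `i`,
subdivide the arc `(q,j)` into `j` with a new node `p`, and add the arc `(p,i)`. -/
def CherryAug (N : Net) (i j : ℕ) (N' : Net) : Prop :=
  ∃ q p, (q, j) ∈ N.A ∧ i ∉ N.V ∧ p ∉ N.V ∧ p ≠ i ∧
    N'.V = insert i (insert p N.V) ∧
    N'.A = (N.A.erase (q, j)) ∪ {(q, p), (p, j), (p, i)}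

/-- Augmentation of `(i,j)` when `i` is already a leaf: subdivide the arcs into
`i` and `j` with new nodes `pi`, `pj` and add the arc `(pj, pi)`. -/
def RetAug (N : Net) (i j : ℕ) (N' : Net) : Prop :=
  ∃ qi qj pi pj, (qi, i) ∈ N.A ∧ (qj, j) ∈ N.A ∧
    pi ∉ N.V ∧ pj ∉ N.V ∧ pi ≠ pj ∧
    N'.V = insert pi (insert pj N.V) ∧
    N'.A = ((N.A.erase (qi, i)).erase (qj, j)) ∪
      {(qi, pi), (pi, i), (qj, pj), (pj, j), (pj, pi)}

/-- `N'` is the augmentation `^{(i,j)}N` of the pair `s = (i,j)` in `N`. -/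
def Augments (N : Net) (s : ℕ × ℕ) (N' : Net) : Prop :=
  s.1 ≠ s.2 ∧ N.isLeaf s.2 ∧
    ((s.1 ∉ N.leaves ∧ CherryAug N s.1 s.2 N') ∨
     (s.1 ∈ N.leaves ∧ RetAug N s.1 s.2 N'))

/-- The total order on pairs: `(i,j) ≤ (i',j')` iff `i < i'` or (`i = i'` and `j ≤ j'`). -/
def pairLE (p q : ℕ × ℕ) : Prop := p.1 < q.1 ∨ (p.1 = q.1 ∧ p.2 ≤ q.2)

/-- Strict version of `pairLE`. -/
def pairLT (p q : ℕ × ℕ) : Prop := p.1 < q.1 ∨ (p.1 = q.1 ∧ p.2 < q.2)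

/-- Lexicographic order on sequences of pairs (of the same length). -/
def seqLE : List (ℕ × ℕ) → List (ℕ × ℕ) → Prop
  | [], [] => True
  | p :: S, q :: S' => pairLT p q ∨ (p = q ∧ seqLE S S')
  | _, _ => False

/-- `s` is the minimum reducible pair of `N`. -/
def isMRP (N : Net) (s : ℕ × ℕ) : Prop :=
  N.Reducible s ∧ ∀ t, N.Reducible t → pairLE s t

/-- `S` is the minimum complete reducible sequence of `N`. -/
def isMCRS (N : Net) (S : List (ℕ × ℕ)) : Prop :=
  CompleteRS N S ∧ ∀ S', CompleteRS N S' → seqLE S S'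

/-- `N` is (isomorphic to) the network `^S I` generated by applying the
augmentations of `S`, from right to left, to a trivial network. -/
inductive Generates : List (ℕ × ℕ) → Net → Prop
  | triv {N : Net} {l : ℕ} : isTrivial N l → Generates [] N
  | cons {s : ℕ × ℕ} {S : List (ℕ × ℕ)} {N N' : Net} :
      Generates S N → Augments N s N' → Generates (s :: S) N'

/-- `S` is a minimum augmentation sequence: `S = MCRS(^S I)`. -/
def isMinAugSeq (S : List (ℕ × ℕ)) : Prop :=
  ∃ N, Generates S N ∧ isMCRS N S

/-- `N` is tree-child: every internal node has a child that is not a reticulation. -/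
def Net.isTreeChild (N : Net) : Prop :=
  ∀ v ∈ N.V, ¬ N.isLeaf v → ∃ c, (v, c) ∈ N.A ∧ ¬ N.isRetic c

/-- The possible states of a taxon in a network. -/
inductive LState | sN | sP | sS | sT
deriving DecidableEq

open Classical in
/-- The state `σ_N(i)` of a taxon `i`: `sN` if `i` is not a leaf of `N`; otherwise
`sP` if its parent is a reticulation; otherwise `sS` if its sibling is a
reticulation; otherwise `sT`. -/
noncomputable def state (N : Net) (i : ℕ) : LState :=
  if ¬ N.isLeaf i then .sN
  else if ∃ p, (p, i) ∈ N.A ∧ N.isRetic p then .sP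
  else if ∃ p s, (p, i) ∈ N.A ∧ (p, s) ∈ N.A ∧ s ≠ i ∧ N.isRetic s then .sS
  else .sT

/-!
Both reductions are contractions: they delete nodes and replace arcs by paths of `N`, every
remaining node keeps its in- and out-degree, and a remaining node that loses an arc gains one to a
leaf. A contraction of a binary network is binary, and a contraction of a tree-child network is
tree-child. Conversely, a tree-child network that is not trivial has a lowest tree node `u`. Its
non-reticulate child is a leaf `l`, and its other child is either a leaf, forming a cherry with
`l`, or a reticulation whose only child is then a leaf, forming a reticulated cherry with `l`.
Reducing that pair and inducting on the number of nodes gives a complete reducible sequence.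
-/

open Finset Relation

theorem Finset.card_filter_sdiff_union_add {α : Type*} [DecidableEq α] {A R S : Finset α}
    (p : α → Prop) [DecidablePred p] (hR : R ⊆ A) (hS : Disjoint A S) :
    #{a ∈ A \ R ∪ S | p a} + #{a ∈ R | p a} = #{a ∈ A | p a} + #{a ∈ S | p a} := by
  rw [filter_union, card_union_of_disjoint (disjoint_filter_filter (hS.mono_left sdiff_subset)),
    add_right_comm, ← card_union_of_disjoint (disjoint_filter_filter sdiff_disjoint),
    ← filter_union, sdiff_union_of_subset hR]

theorem Finset.mem_of_card_filter_le {α : Type*} {A R : Finset α} (p : α → Prop) [DecidablePred p]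
    (hR : R ⊆ A) (hcard : #{a ∈ A | p a} ≤ #{a ∈ R | p a}) {a : α} (ha : a ∈ A) (hpa : p a) :
    a ∈ R :=
  (mem_filter.1 (eq_of_subset_of_card_le (filter_subset_filter p hR) hcard ▸
    mem_filter.2 ⟨ha, hpa⟩)).1

theorem Finset.exists_forall_not_transGen {α : Type*} {r : α → α → Prop}
    (hr : ∀ a, ¬ TransGen r a a) {s : Finset α} (hs : s.Nonempty) :
    ∃ a ∈ s, ∀ b ∈ s, ¬ TransGen r a b := by
  let q : s → s → Prop := fun a b => TransGen r b a
  have : IsTrans s q := ⟨fun _ _ _ hab hbc => hbc.trans hab⟩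
  have : Std.Irrefl q := ⟨fun a => hr a⟩
  obtain ⟨⟨a, ha⟩, -, hmin⟩ :=
    (Finite.wellFounded_of_trans_of_irrefl q).has_min Set.univ ⟨⟨_, hs.choose_spec⟩, trivial⟩
  exact ⟨a, ha, fun b hb => hmin ⟨b, hb⟩ trivial⟩

namespace Net

variable {N : Net} {u v w : ℕ}

theorem indeg_pos (h : (u, v) ∈ N.A) : 0 < N.indeg v :=
  card_pos.2 ⟨_, mem_filter.2 ⟨h, rfl⟩⟩

theorem outdeg_pos (h : (u, v) ∈ N.A) : 0 < N.outdeg u :=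
  card_pos.2 ⟨_, mem_filter.2 ⟨h, rfl⟩⟩

theorem exists_parent (h : 0 < N.indeg v) : ∃ u, (u, v) ∈ N.A := by
  obtain ⟨⟨u, v'⟩, ha⟩ := card_pos.1 h
  obtain ⟨huv, rfl : v' = v⟩ := mem_filter.1 ha
  exact ⟨u, huv⟩

theorem exists_child (h : 0 < N.outdeg u) : ∃ v, (u, v) ∈ N.A := by
  obtain ⟨⟨u', v⟩, ha⟩ := card_pos.1 h
  obtain ⟨huv, rfl : u' = u⟩ := mem_filter.1 ha
  exact ⟨v, huv⟩

theorem exists_other_parent (h : 1 < N.indeg v) (hu : (u, v) ∈ N.A) :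
    ∃ w, (w, v) ∈ N.A ∧ w ≠ u := by
  obtain ⟨⟨w, v'⟩, hw, hne⟩ := exists_mem_ne h (u, v)
  obtain ⟨hwv, rfl : v' = v⟩ := mem_filter.1 hw
  exact ⟨w, hwv, fun hwu => hne (hwu ▸ rfl)⟩

theorem exists_other_child (h : 1 < N.outdeg u) (hv : (u, v) ∈ N.A) :
    ∃ w, (u, w) ∈ N.A ∧ w ≠ v := by
  obtain ⟨⟨u', w⟩, hw, hne⟩ := exists_mem_ne h (u, v)
  obtain ⟨huw, rfl : u' = u⟩ := mem_filter.1 hw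
  exact ⟨w, huw, fun hwv => hne (hwv ▸ rfl)⟩

theorem parent_eq_of_indeg_eq_one (h : N.indeg v = 1) (hu : (u, v) ∈ N.A)
    (hw : (w, v) ∈ N.A) : u = w :=
  congrArg Prod.fst <| card_le_one.1 h.le _ (mem_filter.2 ⟨hu, rfl⟩) _ (mem_filter.2 ⟨hw, rfl⟩)

theorem child_eq_of_outdeg_eq_one (h : N.outdeg u = 1) (hv : (u, v) ∈ N.A)
    (hw : (u, w) ∈ N.A) : v = w :=
  congrArg Prod.snd <| card_le_one.1 h.le _ (mem_filter.2 ⟨hv, rfl⟩) _ (mem_filter.2 ⟨hw, rfl⟩)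

theorem two_le_outdeg (hv : (u, v) ∈ N.A) (hw : (u, w) ∈ N.A) (hvw : v ≠ w) :
    2 ≤ N.outdeg u :=
  one_lt_card.2 ⟨_, mem_filter.2 ⟨hv, rfl⟩, _, mem_filter.2 ⟨hw, rfl⟩, by simp [hvw]⟩

theorem mem_V_of_mem_A (h : N.isPhylo) (huv : (u, v) ∈ N.A) : u ∈ N.V ∧ v ∈ N.V :=
  h.1 _ huv

theorem ne_of_mem_A (h : N.isPhylo) (huv : (u, v) ∈ N.A) : u ≠ v := by
  rintro rfl
  exact h.2.1 u (.single huv)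

theorem isLeaf_or_isTreeNode_or_isRetic (h : N.isPhylo) (huv : (u, v) ∈ N.A) :
    N.isLeaf v ∨ N.isTreeNode v ∨ N.isRetic v := by
  rcases h.2.2.2 v (mem_V_of_mem_A h huv).2 with ⟨-, hi, -⟩ | hv | hv | hv
  · exact absurd hi (indeg_pos huv).ne'
  all_goals simp [hv]

theorem indeg_pos_of_ne_isRoot (h : N.isPhylo) {r : ℕ} (hr : N.isRoot r) (hv : v ∈ N.V)
    (hvr : v ≠ r) : 0 < N.indeg v := by
  rcases h.2.2.2 v hv with hv | ⟨-, hi, -⟩ | ⟨-, hi, -⟩ | ⟨-, hi, -⟩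
  · exact absurd (h.2.2.1.unique hv hr) hvr
  all_goals omega

theorem isTreeNode_of_two_le_outdeg (h : N.isPhylo) (hv : v ∈ N.V) (h2 : 2 ≤ N.outdeg v) :
    N.isTreeNode v := by
  rcases h.2.2.2 v hv with ⟨-, -, ho⟩ | ⟨-, -, ho⟩ | hv | ⟨-, -, ho⟩
  all_goals first | exact hv | omega

structure Contraction (N N' : Net) : Prop where
  V_ssubset : N'.V ⊂ N.V
  mem_V_of_mem_A : ∀ a ∈ N'.A, a.1 ∈ N'.V ∧ a.2 ∈ N'.V
  transGen_of_mem_A : ∀ a ∈ N'.A, TransGen (fun u w => (u, w) ∈ N.A) a.1 a.2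
  indeg_eq : ∀ v ∈ N'.V, N'.indeg v = N.indeg v
  outdeg_eq : ∀ v ∈ N'.V, N'.outdeg v = N.outdeg v
  mem_V_of_isRoot : ∀ r, N.isRoot r → r ∈ N'.V
  exists_isLeaf_of_not_mem_A :
    ∀ v ∈ N'.V, ∀ c, (v, c) ∈ N.A → (v, c) ∉ N'.A → ∃ l, (v, l) ∈ N'.A ∧ N.isLeaf l

namespace Contraction

variable {N N' : Net} {v : ℕ}

theorem card_lt (hc : N.Contraction N') : N'.V.card < N.V.card :=
  card_lt_card hc.V_ssubset

theorem isRoot_iff (hc : N.Contraction N') (hv : v ∈ N'.V) : N'.isRoot v ↔ N.isRoot v := by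
  simp [isRoot, hv, hc.V_ssubset.subset hv, hc.indeg_eq v hv, hc.outdeg_eq v hv]

theorem isLeaf_iff (hc : N.Contraction N') (hv : v ∈ N'.V) : N'.isLeaf v ↔ N.isLeaf v := by
  simp [isLeaf, hv, hc.V_ssubset.subset hv, hc.indeg_eq v hv, hc.outdeg_eq v hv]

theorem isTreeNode_iff (hc : N.Contraction N') (hv : v ∈ N'.V) :
    N'.isTreeNode v ↔ N.isTreeNode v := by
  simp [isTreeNode, hv, hc.V_ssubset.subset hv, hc.indeg_eq v hv, hc.outdeg_eq v hv]

theorem isRetic_iff (hc : N.Contraction N') (hv : v ∈ N'.V) : N'.isRetic v ↔ N.isRetic v := by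
  simp [isRetic, hv, hc.V_ssubset.subset hv, hc.indeg_eq v hv, hc.outdeg_eq v hv]

theorem isPhylo (hc : N.Contraction N') (h : N.isPhylo) : N'.isPhylo := by
  refine ⟨hc.mem_V_of_mem_A, fun v hv => h.2.1 v ?_, ?_, fun v hv => ?_⟩
  · exact hv.lift' id fun a b hab => hc.transGen_of_mem_A (a, b) hab
  · obtain ⟨r, hr, hr_unique⟩ := h.2.2.1
    have hr' := hc.mem_V_of_isRoot r hr
    exact ⟨r, (hc.isRoot_iff hr').2 hr,
      fun v hv => hr_unique v ((hc.isRoot_iff hv.1).1 hv)⟩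
  · rw [hc.isRoot_iff hv, hc.isLeaf_iff hv, hc.isTreeNode_iff hv, hc.isRetic_iff hv]
    exact h.2.2.2 v (hc.V_ssubset.subset hv)

theorem isTreeChild (hc : N.Contraction N') (htc : N.isTreeChild) : N'.isTreeChild := by
  intro v hv hv_leaf
  obtain ⟨c, hvc, hc_retic⟩ := htc v (hc.V_ssubset.subset hv) ((hc.isLeaf_iff hv).not.1 hv_leaf)
  by_cases hvc' : (v, c) ∈ N'.A
  · exact ⟨c, hvc', (hc.isRetic_iff (hc.mem_V_of_mem_A _ hvc').2).not.2 hc_retic⟩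
  · obtain ⟨l, hvl, hl⟩ := hc.exists_isLeaf_of_not_mem_A v hv c hvc hvc'
    have hl' : l ∈ N'.V := (hc.mem_V_of_mem_A _ hvl).2
    refine ⟨l, hvl, fun hl_retic => ?_⟩
    obtain ⟨-, hl_in, -⟩ := hl
    obtain ⟨-, hl_in', -⟩ := (hc.isRetic_iff hl').1 hl_retic
    omega

end Contraction

/-- At a deleted node, `hdeg_del` says that all of its arcs are among the removed arcs `R`. -/
theorem contraction_of_A_eq_sdiff_union {N N' : Net} {R S : Finset (ℕ × ℕ)}
    (hN : ∀ a ∈ N.A, a.1 ∈ N.V ∧ a.2 ∈ N.V) (hV : N'.V ⊂ N.V) (hA : N'.A = N.A \ R ∪ S)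
    (hR : R ⊆ N.A) (hS : Disjoint N.A S) (hS_mem : ∀ a ∈ S, a.1 ∈ N'.V ∧ a.2 ∈ N'.V)
    (hS_path : ∀ a ∈ S, TransGen (fun u w => (u, w) ∈ N.A) a.1 a.2)
    (hdeg : ∀ v ∈ N'.V,
      #{a ∈ R | a.2 = v} = #{a ∈ S | a.2 = v} ∧ #{a ∈ R | a.1 = v} = #{a ∈ S | a.1 = v})
    (hdeg_del : ∀ v ∈ N.V, v ∉ N'.V →
      #{a ∈ R | a.2 = v} = N.indeg v ∧ #{a ∈ R | a.1 = v} = N.outdeg v)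
    (hroot : ∀ r, N.isRoot r → r ∈ N'.V)
    (hleaf : ∀ a ∈ R, a.1 ∈ N'.V → ∃ l, (a.1, l) ∈ S ∧ N.isLeaf l) :
    N.Contraction N' where
  V_ssubset := hV
  mem_V_of_mem_A a ha := by
    rw [hA, mem_union, mem_sdiff] at ha
    rcases ha with ⟨ha, haR⟩ | ha
    · refine ⟨by_contra fun h1 => haR ?_, by_contra fun h2 => haR ?_⟩
      · exact mem_of_card_filter_le _ hR (hdeg_del _ (hN a ha).1 h1).2.ge ha rfl
      · exact mem_of_card_filter_le _ hR (hdeg_del _ (hN a ha).2 h2).1.ge ha rfl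
    · exact hS_mem a ha
  transGen_of_mem_A a ha := by
    rw [hA, mem_union, mem_sdiff] at ha
    exact ha.elim (fun ha => .single ha.1) (hS_path a)
  indeg_eq v hv := by
    have := card_filter_sdiff_union_add (fun a : ℕ × ℕ => a.2 = v) hR hS
    rw [← hA, (hdeg v hv).1] at this
    exact Nat.add_right_cancel this
  outdeg_eq v hv := by
    have := card_filter_sdiff_union_add (fun a : ℕ × ℕ => a.1 = v) hR hS
    rw [← hA, (hdeg v hv).2] at this
    exact Nat.add_right_cancel this
  mem_V_of_isRoot := hroot
  exists_isLeaf_of_not_mem_A v hv c hvc hvc' := by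
    have hR' : (v, c) ∈ R := by
      by_contra hR'
      exact hvc' (hA ▸ mem_union_left _ (mem_sdiff.2 ⟨hvc, hR'⟩))
    obtain ⟨l, hl, hl_leaf⟩ := hleaf _ hR' hv
    exact ⟨l, hA ▸ mem_union_right _ hl, hl_leaf⟩

end Net

theorem CherryReduce.contraction {N N' : Net} {i j : ℕ} (h : N.isPhylo) (hc : N.isCherry i j)
    (hr : CherryReduce N i j N') : N.Contraction N' := by
  obtain ⟨hij, ⟨hiV, hi_in, hi_out⟩, ⟨hjV, hj_in, hj_out⟩, -⟩ := hc
  obtain ⟨p, g, hpi, hpj, hgp, hV, hA⟩ := hr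
  obtain ⟨hpV, hp_in, hp_out⟩ :=
    Net.isTreeNode_of_two_le_outdeg h (Net.mem_V_of_mem_A h hpi).1 (Net.two_le_outdeg hpi hpj hij)
  have hg_out := Net.outdeg_pos hgp
  have hgp' := Net.ne_of_mem_A h hgp
  obtain ⟨hpi', hpj', hgi, hgj⟩ : p ≠ i ∧ p ≠ j ∧ g ≠ i ∧ g ≠ j := by
    refine ⟨?_, ?_, ?_, ?_⟩ <;> rintro rfl <;> omega
  have hgjA : (g, j) ∉ N.A := fun hgj => hgp' (Net.parent_eq_of_indeg_eq_one hj_in hgj hpj)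
  have hss : N'.V ⊂ N.V := hV ▸ (erase_subset _ _).trans_ssubset (erase_ssubset hiV)
  have hmem : ∀ v, v ∈ N'.V ↔ v ≠ p ∧ v ≠ i ∧ v ∈ N.V := by simp [hV]
  clear hV
  refine Net.contraction_of_A_eq_sdiff_union h.1 hss hA ?_ ?_ ?_ ?_ ?_ ?_ ?_ ?_
  · simp [insert_subset_iff, hpi, hpj, hgp]
  · simpa using hgjA
  · simp [hmem, hgp', hgi, (Net.mem_V_of_mem_A h hgp).1, hpj'.symm, hij.symm, hjV]
  · simpa using .head hgp (.single hpj)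
  · intro v hv
    simp only [filter_insert, filter_singleton]
    constructor <;> split_ifs <;> simp_all
  · intro v hv hv'
    obtain rfl | rfl : v = p ∨ v = i := by simpa [hmem, hv, or_iff_not_imp_left] using hv'
    all_goals simp only [filter_insert, filter_singleton]; constructor <;> split_ifs <;> simp_all
  · rintro r ⟨hrV, hr_in, -⟩
    refine (hmem r).2 ⟨?_, ?_, hrV⟩ <;> rintro rfl <;> omega
  · simp only [mem_insert, mem_singleton]
    rintro a (rfl | rfl | rfl) ha <;> simp [hmem] at ha
    exact ⟨j, rfl, hjV, hj_in, hj_out⟩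

theorem RetCherryReduce.contraction {N N' : Net} {i j : ℕ} (h : N.isPhylo)
    (hc : N.isRetCherry i j) (hr : RetCherryReduce N i j N') : N.Contraction N' := by
  obtain ⟨hij, ⟨hiV, hi_in, hi_out⟩, ⟨hjV, hj_in, hj_out⟩, pi', pj', hpi'i, hpj'j,
    hpi_retic, hpj_tree, -⟩ := hc
  obtain ⟨pi, pj, q, g, hpii, hpjj, hpjpi, hqpi, hqpj, hgpj, hV, hA⟩ := hr
  obtain rfl := Net.parent_eq_of_indeg_eq_one hi_in hpii hpi'i
  obtain rfl := Net.parent_eq_of_indeg_eq_one hj_in hpjj hpj'j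
  obtain ⟨hpiV, hpi_in, hpi_out⟩ := hpi_retic
  obtain ⟨hpjV, hpj_in, hpj_out⟩ := hpj_tree
  have hq_out := Net.outdeg_pos hqpi
  have hg_out := Net.outdeg_pos hgpj
  have hpjq := hqpj.symm
  have hqpi' := Net.ne_of_mem_A h hqpi
  have hgpj' := Net.ne_of_mem_A h hgpj
  obtain ⟨hpipj, hpii', hpij, hpji, hpjj', hqi, hqj, hgi, hgj⟩ :
      pi ≠ pj ∧ pi ≠ i ∧ pi ≠ j ∧ pj ≠ i ∧ pj ≠ j ∧ q ≠ i ∧ q ≠ j ∧ g ≠ i ∧ g ≠ j := by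
    refine ⟨?_, ?_, ?_, ?_, ?_, ?_, ?_, ?_, ?_⟩ <;> rintro rfl <;> omega
  have hgpi : g ≠ pi := by
    rintro rfl
    exact hpji (Net.child_eq_of_outdeg_eq_one hpi_out hgpj hpii)
  have hqiA : (q, i) ∉ N.A := fun hqi => hqpi' (Net.parent_eq_of_indeg_eq_one hi_in hqi hpii)
  have hgjA : (g, j) ∉ N.A := fun hgj => hgpj' (Net.parent_eq_of_indeg_eq_one hj_in hgj hpjj)
  have hss : N'.V ⊂ N.V := hV ▸ (erase_subset _ _).trans_ssubset (erase_ssubset hpiV)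
  have hmem : ∀ v, v ∈ N'.V ↔ v ≠ pj ∧ v ≠ pi ∧ v ∈ N.V := by simp [hV]
  clear hV
  refine Net.contraction_of_A_eq_sdiff_union h.1 hss hA ?_ ?_ ?_ ?_ ?_ ?_ ?_ ?_
  · simp [insert_subset_iff, hpjpi, hqpi, hpii, hgpj, hpjj]
  · simp [hqiA, hgjA]
  · simp [hmem, hqpj, hqpi', (Net.mem_V_of_mem_A h hqpi).1, hpji.symm, hpii'.symm, hiV,
      hgpj', hgpi, (Net.mem_V_of_mem_A h hgpj).1, hpjj'.symm, hpij.symm, hjV]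
  · simpa using ⟨.head hqpi (.single hpii), .head hgpj (.single hpjj)⟩
  · intro v hv
    simp only [filter_insert, filter_singleton]
    constructor <;> split_ifs <;> simp_all
  · intro v hv hv'
    obtain rfl | rfl : v = pj ∨ v = pi := by simpa [hmem, hv, or_iff_not_imp_left] using hv'
    all_goals simp only [filter_insert, filter_singleton]; constructor <;> split_ifs <;> simp_all
  · rintro r ⟨hrV, hr_in, -⟩
    refine (hmem r).2 ⟨?_, ?_, hrV⟩ <;> rintro rfl <;> omega
  · simp only [mem_insert, mem_singleton]
    rintro a (rfl | rfl | rfl | rfl | rfl) ha <;> simp [hmem] at ha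
    exacts [⟨i, Or.inl rfl, hiV, hi_in, hi_out⟩, ⟨j, Or.inr rfl, hjV, hj_in, hj_out⟩]

theorem Reduces.contraction {N N' : Net} {s : ℕ × ℕ} (h : N.isPhylo) (hr : Reduces N s N') :
    N.Contraction N' :=
  hr.elim (fun ⟨hc, hr⟩ => hr.contraction h hc) (fun ⟨hc, hr⟩ => hr.contraction h hc)

namespace Net

variable {N : Net} {r c t : ℕ}

theorem Reducible.exists_reduces {s : ℕ × ℕ} (h : N.isPhylo) (hs : N.Reducible s) :
    ∃ N', Reduces N s N' := by
  rcases hs with hc | hc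
  · have ⟨hij, _, _, p, hpi, hpj⟩ := hc
    obtain ⟨-, hp_in, -⟩ :=
      isTreeNode_of_two_le_outdeg h (mem_V_of_mem_A h hpi).1 (two_le_outdeg hpi hpj hij)
    obtain ⟨g, hgp⟩ := exists_parent (hp_in ▸ one_pos)
    exact ⟨⟨_, _⟩, .inl ⟨hc, p, g, hpi, hpj, hgp, rfl, rfl⟩⟩
  · have ⟨_, _, _, pi, pj, hpii, hpjj, ⟨_, hpi_in, _⟩, ⟨_, hpj_in, _⟩, hpjpi⟩ := hc
    obtain ⟨q, hqpi, hqpj⟩ := exists_other_parent (hpi_in ▸ one_lt_two) hpjpi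
    obtain ⟨g, hgpj⟩ := exists_parent (hpj_in ▸ one_pos)
    exact ⟨⟨_, _⟩, .inr ⟨hc, pi, pj, q, g, hpii, hpjj, hpjpi, hqpi, hqpj, hgpj, rfl, rfl⟩⟩

theorem eq_or_eq_of_isLeaf_child (h : N.isPhylo) (hr : N.isRoot r) (hrc : (r, c) ∈ N.A)
    (hc : N.isLeaf c) {v : ℕ} (hv : v ∈ N.V) : v = r ∨ v = c := by
  by_contra! hv'
  obtain ⟨m, hm, hm_top⟩ := exists_forall_not_transGen (r := fun a b => (b, a) ∈ N.A)
    (fun a ha => h.2.1 a (transGen_swap.1 ha)) (s := {v ∈ N.V | v ≠ r ∧ v ≠ c})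
    ⟨v, by simp [hv, hv']⟩
  simp only [mem_filter] at hm
  obtain ⟨u, hum⟩ := exists_parent (indeg_pos_of_ne_isRoot h hr hm.1 hm.2.1)
  have hu : u = r ∨ u = c := by
    by_contra! hu
    exact hm_top u (by simp [(mem_V_of_mem_A h hum).1, hu]) (.single hum)
  rcases hu with rfl | rfl
  · exact hm.2.2 (child_eq_of_outdeg_eq_one hr.2.2 hum hrc)
  · exact (outdeg_pos hum).ne' hc.2.2

theorem isTrivial_of_isLeaf_child (h : N.isPhylo) (hr : N.isRoot r) (hrc : (r, c) ∈ N.A)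
    (hc : N.isLeaf c) : isTrivial N c := by
  have hV := fun {v} => eq_or_eq_of_isLeaf_child (v := v) h hr hrc hc
  refine ⟨r, ne_of_mem_A h hrc, ?_, ?_⟩
  · ext v
    simp only [mem_insert, mem_singleton]
    refine ⟨hV, ?_⟩
    rintro (rfl | rfl)
    exacts [hr.1, hc.1]
  · ext ⟨a, b⟩
    simp only [mem_singleton, Prod.mk.injEq]
    refine ⟨fun hab => ?_, fun ⟨ha, hb⟩ => ha ▸ hb ▸ hrc⟩
    obtain ⟨haV, hbV⟩ := mem_V_of_mem_A h hab
    have ha : a ≠ c := by rintro rfl; exact (outdeg_pos hab).ne' hc.2.2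
    have hb : b ≠ r := by rintro rfl; exact (indeg_pos hab).ne' hr.2.1
    exact ⟨(hV haV).resolve_right ha, (hV hbV).resolve_left hb⟩

theorem exists_reducible_of_isTreeNode (h : N.isPhylo) (htc : N.isTreeChild)
    (ht : N.isTreeNode t) : ∃ s, N.Reducible s := by
  classical
  obtain ⟨u, hu, hu_low⟩ := exists_forall_not_transGen h.2.1 (s := {v ∈ N.V | N.isTreeNode v})
    ⟨t, mem_filter.2 ⟨ht.1, ht⟩⟩
  replace hu := (mem_filter.1 hu).2
  have hbelow : ∀ z, TransGen (fun u w => (u, w) ∈ N.A) u z → ¬ N.isTreeNode z :=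
    fun z huz hz => hu_low z (mem_filter.2 ⟨hz.1, hz⟩) huz
  have hchild : ∀ z, (u, z) ∈ N.A → N.isLeaf z ∨ N.isRetic z := fun z huz =>
    (isLeaf_or_isTreeNode_or_isRetic h huz).imp_right (·.resolve_left (hbelow z (.single huz)))
  obtain ⟨l, hul, hl_retic⟩ := htc u hu.1 fun hu_leaf => by
    have := hu.2.2; have := hu_leaf.2.2; omega
  have hl : N.isLeaf l := (hchild l hul).resolve_right hl_retic
  obtain ⟨z, huz, hzl⟩ := exists_other_child (hu.2.2 ▸ one_lt_two) hul
  rcases hchild z huz with hz | hz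
  · exact ⟨(z, l), .inl ⟨hzl, hz, hl, u, huz, hul⟩⟩
  obtain ⟨d, hzd, hd_retic⟩ := htc z hz.1 fun hz_leaf => by
    have := hz.2.2; have := hz_leaf.2.2; omega
  have hd : N.isLeaf d := by
    rcases isLeaf_or_isTreeNode_or_isRetic h hzd with hd | hd | hd
    exacts [hd, absurd hd (hbelow d (.head huz (.single hzd))), absurd hd hd_retic]
  have hdl : d ≠ l := by
    rintro rfl
    exact ne_of_mem_A h huz (parent_eq_of_indeg_eq_one hl.2.1 hul hzd)
  exact ⟨(d, l), .inr ⟨hdl, hd, hl, z, u, hzd, hul, hz, hu, huz⟩⟩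

theorem isTrivial_or_exists_reducible (h : N.isPhylo) (htc : N.isTreeChild) :
    (∃ l, isTrivial N l) ∨ ∃ s, N.Reducible s := by
  obtain ⟨r, hr, -⟩ := h.2.2.1
  obtain ⟨c, hrc⟩ := exists_child (hr.2.2 ▸ one_pos)
  by_cases hc : N.isLeaf c
  · exact .inl ⟨c, isTrivial_of_isLeaf_child h hr hrc hc⟩
  obtain ⟨c', hrc', hc'⟩ := htc r hr.1 fun hr_leaf => by
    have := hr.2.1; have := hr_leaf.2.1; omega
  obtain rfl := child_eq_of_outdeg_eq_one hr.2.2 hrc hrc'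
  exact .inr <| exists_reducible_of_isTreeNode h htc <|
    ((isLeaf_or_isTreeNode_or_isRetic h hrc).resolve_left hc).resolve_right hc'

theorem exists_completeRS (h : N.isPhylo) (htc : N.isTreeChild) : ∃ S, CompleteRS N S := by
  induction hn : N.V.card using Nat.strong_induction_on generalizing N with
  | _ n ih =>
    rcases isTrivial_or_exists_reducible h htc with ⟨l, hl⟩ | ⟨s, hs⟩
    · exact ⟨[], N, l, .nil N, hl⟩
    obtain ⟨N', hN'⟩ := hs.exists_reduces h
    have hc := hN'.contraction h
    obtain ⟨S, N'', l, hS, hl⟩ := ih _ (hn ▸ hc.card_lt) (hc.isPhylo h) (hc.isTreeChild htc) rfl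
    exact ⟨s :: S, N'', l, .cons hN' hS, hl⟩

end Net

/-- Every tree-child network is orchard, and reductions of tree-child networks
are tree-child. -/
theorem treeChild_isOrchard_and_reduce (N : Net)
    (h : N.isPhylo) (htc : N.isTreeChild) :
    N.isOrchard ∧ ∀ (s : ℕ × ℕ) (N' : Net), Reduces N s N' → N'.isTreeChild :=
  ⟨⟨h, Net.exists_completeRS h htc⟩, fun _ _ hr => (hr.contraction h).isTreeChild htc⟩
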